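/- For a positive integer n with NAF-bitlength k, the number of zero digits in its reduced NAF equals deg(B_{2^k - n}), and the Hamming weight of its reduced NAF equals k - deg(B_{2^k - n}). -/

import Mathlib

open Polynomial in
/-- The Stern polynomial: `B 0 = 0`, `B 1 = 1`, `B (2n) = t * B n`, `B (2n+1) = B n + B (n+1)`. -/
noncomputable def sternP : ℕ → Polynomial ℕ
  | 0 => 0
  | 1 => 1
  | n + 2 =>
    if (n + 2) % 2 = 0 then X * sternP (n / 2 + 1)
    else sternP (n / 2 + 1) + sternP (n / 2 + 2)
decreasing_by all_goals omega

/-- The digits of a BSD representation lie in {-1, 0, 1}. -/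
def IsBSDDigits {i : ℕ} (b : Fin i → ℤ) : Prop := ∀ j, b j ∈ ({-1, 0, 1} : Set ℤ)

/-- The value represented by the digit string `b` (least significant digit `b 0`). -/
def bsdVal {i : ℕ} (b : Fin i → ℤ) : ℤ := ∑ j : Fin i, b j * 2 ^ (j : ℕ)

/-- `b` is a (not necessarily reduced) non-adjacent form digit string of length `k`:
digits in {-1,0,1}, no two adjacent digits both nonzero, and nonzero leading digit
(when `k > 0`). -/
def IsReducedNAF {k : ℕ} (b : Fin k → ℤ) : Prop :=
  IsBSDDigits b ∧
  (∀ j : Fin k, ∀ h : (j : ℕ) + 1 < k, b j = 0 ∨ b ⟨(j : ℕ) + 1, h⟩ = 0) ∧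
  (∀ h : 0 < k, b ⟨k - 1, Nat.sub_lt h one_pos⟩ ≠ 0)

/-- `m` has a reduced NAF representation of bitlength `k`. -/
def HasNAFLen (m : ℤ) (k : ℕ) : Prop :=
  ∃ b : Fin k → ℤ, IsReducedNAF b ∧ bsdVal b = m

/-- `I k`: the set of positive integers of NAF-bitlength `k`. -/
def NAFInterval (k : ℕ) : Set ℕ := {n : ℕ | HasNAFLen (n : ℤ) k}

/-- `a k = min I k`: `a 1 = 1`, `a 2 = 2`, `a k = 2^(k-2) + a (k-2)`. -/
def aseq : ℕ → ℕ
  | 0 => 0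
  | 1 => 1
  | 2 => 2
  | k + 3 => 2 ^ (k + 1) + aseq (k + 1)

/-- The NAF-bitlength of `n`. -/
noncomputable def nafLen (n : ℕ) : ℕ := sInf {k : ℕ | HasNAFLen (n : ℤ) k}

/-- The minimal Hamming weight of a BSD representation of `n` of length
equal to its NAF-bitlength. -/
noncomputable def minWeight (n : ℕ) : ℕ :=
  sInf {w : ℕ | ∃ b : Fin (nafLen n) → ℤ,
    IsBSDDigits b ∧ bsdVal b = (n : ℤ) ∧ {j | b j ≠ 0}.ncard = w}

/-- `Z n`: the number of zeros in an optimal (minimal-weight) BSD representation of `n`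
of length equal to its NAF-bitlength. -/
noncomputable def Zfun (n : ℕ) : ℕ := nafLen n - minWeight n

/-- `M n`: the number of optimal (minimal-weight) BSD representations of `n`
of length equal to its NAF-bitlength. -/
noncomputable def Mfun (n : ℕ) : ℕ :=
  {b : Fin (nafLen n) → ℤ |
    IsBSDDigits b ∧ bsdVal b = (n : ℤ) ∧ {j | b j ≠ 0}.ncard = minWeight n}.ncard

/-! Read the NAF from its least significant digit and put `m = 2 ^ k - n`. A zero digit halves
both `n` and `m`, and `B_{2m} = t B_m` raises the degree by one. A nonzero digit `±1` is followed
by a zero, so `n = 4 n' ± 1` and `m = 4 m' ∓ 1`; since the degrees of consecutive Stern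
polynomials differ by at most one, `deg B_{4m' ∓ 1} = deg B_{m'} + 1`. So every zero digit, and
nothing else, adds one to `deg B_m`. -/

open Polynomial Finset

section CanonicallyOrdered

variable {R : Type*} [Semiring R] [PartialOrder R] [CanonicallyOrderedAdd R]

theorem Polynomial.degree_add_eq_max (p q : R[X]) :
    (p + q).degree = max p.degree q.degree := by
  rcases eq_or_ne p 0 with rfl | hp
  · simp
  exact degree_add_eq_of_leadingCoeff_add_ne_zero (by simp [add_eq_zero, hp])

theorem Polynomial.natDegree_add_eq_max (p q : R[X]) :
    (p + q).natDegree = max p.natDegree q.natDegree := by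
  rcases eq_or_ne p 0 with rfl | hp
  · simp
  rcases eq_or_ne q 0 with rfl | hq
  · simp
  have h := degree_add_eq_max p q
  rw [degree_eq_natDegree hp, degree_eq_natDegree hq] at h
  exact natDegree_eq_of_degree_eq_some h

theorem Polynomial.add_ne_zero_of_ne_zero_right (p : R[X]) {q : R[X]} (hq : q ≠ 0) :
    p + q ≠ 0 := by
  rw [Ne, ← degree_eq_bot, degree_add_eq_max, _root_.max_eq_bot, degree_eq_bot, degree_eq_bot]
  exact fun h => hq h.2

end CanonicallyOrdered

lemma sternP_two_mul (m : ℕ) : sternP (2 * m) = X * sternP m := by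
  rcases m with _ | m
  · simp [sternP]
  · rw [show 2 * (m + 1) = 2 * m + 2 by ring, sternP, if_pos (by omega)]
    congr 2
    omega

lemma sternP_two_mul_add_one (m : ℕ) : sternP (2 * m + 1) = sternP m + sternP (m + 1) := by
  rcases m with _ | m
  · simp [sternP]
  · rw [show 2 * (m + 1) + 1 = 2 * m + 1 + 2 by ring, sternP, if_neg (by omega)]
    congr 2 <;> omega

lemma sternP_ne_zero {m : ℕ} (hm : 0 < m) : sternP m ≠ 0 := by
  induction m using Nat.strong_induction_on with
  | _ m ih =>
  obtain ⟨r, rfl | rfl⟩ := Nat.even_or_odd' m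
  · rw [sternP_two_mul]
    exact mul_ne_zero X_ne_zero (ih r (by omega) (by omega))
  · rcases r.eq_zero_or_pos with rfl | hr
    · simp [sternP]
    rw [sternP_two_mul_add_one]
    exact add_ne_zero_of_ne_zero_right _ (ih (r + 1) (by omega) (by omega))

lemma natDegree_sternP_two_mul {m : ℕ} (hm : 0 < m) :
    (sternP (2 * m)).natDegree = (sternP m).natDegree + 1 := by
  rw [sternP_two_mul, natDegree_X_mul (sternP_ne_zero hm)]

lemma natDegree_sternP_two_mul_add_one (m : ℕ) :
    (sternP (2 * m + 1)).natDegree = max (sternP m).natDegree (sternP (m + 1)).natDegree := by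
  rw [sternP_two_mul_add_one, natDegree_add_eq_max]

lemma natDegree_sternP_succ_le_and_le (m : ℕ) :
    (sternP (m + 1)).natDegree ≤ (sternP m).natDegree + 1 ∧
      (sternP m).natDegree ≤ (sternP (m + 1)).natDegree + 1 := by
  induction m using Nat.strong_induction_on with
  | _ m ih =>
  obtain ⟨r, rfl | rfl⟩ := Nat.even_or_odd' m
  · rcases r.eq_zero_or_pos with rfl | hr
    · simp [sternP]
    have := ih r (by omega)
    rw [natDegree_sternP_two_mul_add_one, natDegree_sternP_two_mul hr]
    omega
  · have := ih r (by omega)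
    rw [show 2 * r + 1 + 1 = 2 * (r + 1) by ring, natDegree_sternP_two_mul_add_one,
      natDegree_sternP_two_mul (m := r + 1) (by omega)]
    omega

lemma natDegree_sternP_four_mul_add_one {m : ℕ} (hm : 0 < m) :
    (sternP (4 * m + 1)).natDegree = (sternP m).natDegree + 1 := by
  have := natDegree_sternP_succ_le_and_le m
  rw [show 4 * m + 1 = 2 * (2 * m) + 1 by ring, natDegree_sternP_two_mul_add_one,
    natDegree_sternP_two_mul hm, natDegree_sternP_two_mul_add_one]
  omega

lemma natDegree_sternP_four_mul_add_three (m : ℕ) :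
    (sternP (4 * m + 3)).natDegree = (sternP (m + 1)).natDegree + 1 := by
  have := natDegree_sternP_succ_le_and_le m
  rw [show 4 * m + 3 = 2 * (2 * m + 1) + 1 by ring, natDegree_sternP_two_mul_add_one,
    show 2 * m + 1 + 1 = 2 * (m + 1) by ring, natDegree_sternP_two_mul (m := m + 1) (by omega),
    natDegree_sternP_two_mul_add_one]
  omega

def IsNAF {k : ℕ} (b : Fin k → ℤ) : Prop :=
  IsBSDDigits b ∧ ∀ j : Fin k, ∀ h : (j : ℕ) + 1 < k, b j = 0 ∨ b ⟨(j : ℕ) + 1, h⟩ = 0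

lemma IsReducedNAF.isNAF {k : ℕ} {b : Fin k → ℤ} (hb : IsReducedNAF b) : IsNAF b :=
  ⟨hb.1, hb.2.1⟩

section Cons

variable {k : ℕ} {a : ℤ} {b : Fin k → ℤ}

lemma IsNAF.tail (hb : IsNAF (Fin.cons a b : Fin (k + 1) → ℤ)) : IsNAF b :=
  ⟨fun j => by simpa using hb.1 j.succ, fun j h => hb.2 j.succ (by simpa using h)⟩

lemma IsNAF.head_mem (hb : IsNAF (Fin.cons a b : Fin (k + 1) → ℤ)) : a = -1 ∨ a = 0 ∨ a = 1 := by
  simpa using hb.1 0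

lemma IsNAF.head_eq_zero_or {c : ℤ} (hb : IsNAF (Fin.cons a (Fin.cons c b) : Fin (k + 2) → ℤ)) :
    a = 0 ∨ c = 0 := by
  simpa using hb.2 0 (by simp)

lemma bsdVal_cons : bsdVal (Fin.cons a b : Fin (k + 1) → ℤ) = a + 2 * bsdVal b := by
  simp only [bsdVal, Fin.sum_univ_succ, Fin.cons_zero, Fin.cons_succ, Fin.val_zero, Fin.val_succ,
    pow_zero, mul_one, pow_succ, mul_sum]
  congr 1
  exact sum_congr rfl fun j _ => by ring

lemma card_filter_cons_eq_zero :
    #{j | (Fin.cons a b : Fin (k + 1) → ℤ) j = 0} = (if a = 0 then 1 else 0) + #{j | b j = 0} := by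
  simp [Fin.card_filter_univ_succ']

end Cons

lemma bsdVal_lt_two_pow {k : ℕ} {b : Fin k → ℤ} (hb : IsBSDDigits b) : bsdVal b < 2 ^ k := by
  induction k with
  | zero => simp [bsdVal]
  | succ k ih =>
    have hhead : b 0 ≤ 1 := by rcases hb 0 with h | h | h <;> simp_all
    have htail := ih (b := Fin.tail b) fun j => hb j.succ
    rw [← Fin.cons_self_tail b, bsdVal_cons, pow_succ]
    omega

theorem card_filter_eq_zero_eq_natDegree_sternP {k : ℕ} {b : Fin k → ℤ} (hb : IsNAF b) {m : ℕ}
    (hpos : 0 ≤ bsdVal b) (hm : bsdVal b + m = 2 ^ k) :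
    #{j | b j = 0} = (sternP m).natDegree := by
  induction k using Nat.strong_induction_on generalizing m with
  | _ k ih =>
  rcases k with _ | k
  · obtain rfl : m = 1 := by simpa [bsdVal] using hm
    simp [sternP]
  cases b using Fin.consCases with
  | cons a b =>
  have hlt := bsdVal_lt_two_pow hb.tail.1
  rw [bsdVal_cons] at hpos hm
  rw [pow_succ] at hm
  rw [card_filter_cons_eq_zero]
  rcases eq_or_ne a 0 with rfl | ha
  · obtain ⟨m, rfl⟩ : ∃ m', m = 2 * m' := ⟨m / 2, by omega⟩
    rw [if_pos rfl, @ih k (by omega) _ hb.tail m (by omega) (by omega),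
      natDegree_sternP_two_mul (by omega)]
    omega
  rcases k with _ | k
  · obtain rfl : a = 1 := by have := hb.head_mem; simp [bsdVal] at hpos; omega
    obtain rfl : m = 1 := by simp [bsdVal] at hm; omega
    simp [sternP]
  cases b using Fin.consCases with
  | cons c b =>
  obtain rfl : c = 0 := hb.head_eq_zero_or.resolve_left ha
  have hb' := hb.tail.tail
  have hlt' := bsdVal_lt_two_pow hb'.1
  rw [bsdVal_cons, zero_add] at hpos hm
  rw [if_neg ha, card_filter_cons_eq_zero, if_pos rfl]
  obtain rfl | rfl : a = -1 ∨ a = 1 := by have := hb.head_mem; omega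
  · obtain ⟨m, rfl⟩ : ∃ m', m = 4 * m' + 1 := ⟨m / 4, by omega⟩
    rw [@ih k (by omega) _ hb' m (by omega) (by omega), natDegree_sternP_four_mul_add_one (by omega)]
    omega
  · obtain ⟨m, rfl⟩ : ∃ m', m = 4 * m' + 3 := ⟨m / 4, by omega⟩
    rw [@ih k (by omega) _ hb' (m + 1) (by omega) (by omega),
      natDegree_sternP_four_mul_add_three]
    omega

theorem naf_zeros_weight_general (n k : ℕ) (b : Fin k → ℤ)
    (hb : IsReducedNAF b) (hv : bsdVal b = (n : ℤ)) :
    {j | b j = 0}.ncard = (sternP (2 ^ k - n)).natDegree ∧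
    {j | b j ≠ 0}.ncard = k - (sternP (2 ^ k - n)).natDegree := by
  have hlt : n < 2 ^ k := by exact_mod_cast hv ▸ bsdVal_lt_two_pow hb.1
  have hzeros : {j | b j = 0}.ncard = (sternP (2 ^ k - n)).natDegree := by
    rw [← card_filter_eq_zero_eq_natDegree_sternP hb.isNAF (by omega) (by push_cast [hlt.le]; omega),
      ← Set.ncard_coe_finset, coe_filter]
    simp only [mem_univ, true_and]
  refine ⟨hzeros, ?_⟩
  rw [← hzeros, ← Set.compl_ofPred, Set.ncard_compl, Nat.card_eq_fintype_card, Fintype.card_fin]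

theorem naf_zeros_weight (n k : ℕ) (hn : 0 < n) (b : Fin k → ℤ)
    (hb : IsReducedNAF b) (hv : bsdVal b = (n : ℤ)) :
    {j | b j = 0}.ncard = (sternP (2 ^ k - n)).natDegree ∧
    {j | b j ≠ 0}.ncard = k - (sternP (2 ^ k - n)).natDegree :=
  naf_zeros_weight_general n k b hb hv
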